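/- arXiv:1204.5703 — 2 statements merged into one kernel-verified Lean document; each statement's English description precedes it below -/
import Mathlib

section
/- For a scalar admissible system (f,g), the Hessian of the coupled potential satisfies ‖U''(x;ε)‖_∞ ≤ K_{f,g} for all x ∈ [0,1]^n and ε ∈ [0,1], where ‖·‖_∞ on matrices is the maximum absolute row sum; in particular the bound K_{f,g} is independent of n, L and w. -/
open MeasureTheory Set Filter Topology Matrix

noncomputable section

/-- A scalar admissible system `(f, g)` parameterized by `ε ∈ [0,1]`:
`f : [0,1]×[0,1] → [0,1]` is strictly increasing in both arguments for `x, ε ∈ (0,1]`,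
`g : [0,1] → [0,1]` has `g'(x) > 0` for `x ∈ (0,1)`, `f(0;ε) = f(x;0) = g(0) = 0`,
and `f, g` have continuous second derivatives on `[0,1]` w.r.t. all arguments. -/
structure ScalarAdmissible (f : ℝ → ℝ → ℝ) (g : ℝ → ℝ) : Prop where
  f_mem : ∀ x ∈ Icc (0:ℝ) 1, ∀ ε ∈ Icc (0:ℝ) 1, f x ε ∈ Icc (0:ℝ) 1
  g_mem : ∀ x ∈ Icc (0:ℝ) 1, g x ∈ Icc (0:ℝ) 1
  f_mono_x : ∀ ε ∈ Ioc (0:ℝ) 1, StrictMonoOn (fun x => f x ε) (Ioc (0:ℝ) 1)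
  f_mono_eps : ∀ x ∈ Ioc (0:ℝ) 1, StrictMonoOn (fun ε => f x ε) (Ioc (0:ℝ) 1)
  g_deriv_pos : ∀ x ∈ Ioo (0:ℝ) 1, 0 < deriv g x
  f_zero_left : ∀ ε ∈ Icc (0:ℝ) 1, f 0 ε = 0
  f_zero_right : ∀ x ∈ Icc (0:ℝ) 1, f x 0 = 0
  g_zero : g 0 = 0
  f_smooth : ContDiffOn ℝ 2 (fun p : ℝ × ℝ => f p.1 p.2) (Icc (0:ℝ) 1 ×ˢ Icc (0:ℝ) 1)
  g_smooth : ContDiffOn ℝ 2 g (Icc (0:ℝ) 1)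

/-- The single-system potential `U(x;ε) = ∫₀ˣ (z − f(g(z);ε)) g'(z) dz`. -/
def singlePotential (f : ℝ → ℝ → ℝ) (g : ℝ → ℝ) (x ε : ℝ) : ℝ :=
  ∫ z in (0:ℝ)..x, (z - f (g z) ε) * deriv g z

/-- `F(x;ε) = ∫₀ˣ f(z;ε) dz`. -/
def Fint (f : ℝ → ℝ → ℝ) (x ε : ℝ) : ℝ := ∫ z in (0:ℝ)..x, f z ε

/-- `G(x) = ∫₀ˣ g(z) dz`. -/
def Gint (g : ℝ → ℝ) (x : ℝ) : ℝ := ∫ z in (0:ℝ)..x, g z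

/-- The `n × n` coupling matrix `A` with `[A]_{ij} = 1/w` for `i ≤ j ≤ i+w−1`, else `0`. -/
def Amat (n w : ℕ) : Matrix (Fin n) (Fin n) ℝ :=
  fun i j => if (i:ℕ) ≤ (j:ℕ) ∧ (j:ℕ) < (i:ℕ) + w then (1 / (w:ℝ)) else 0

/-- The coupled potential `U(x;ε) = g(x)ᵀx − Σᵢ G(xᵢ) − Σᵢ F([A g(x)]ᵢ; ε)`. -/
def coupledPotential (f : ℝ → ℝ → ℝ) (g : ℝ → ℝ) (n w : ℕ) (x : Fin n → ℝ) (ε : ℝ) : ℝ :=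
  (∑ i, g (x i) * x i) - (∑ i, Gint g (x i)) -
    ∑ i, Fint f ((Amat n w).mulVec (fun j => g (x j)) i) ε

/-- The `(i,j)` entry of the Hessian of the coupled potential `x ↦ U(x;ε)`:
the second derivative taken along the coordinate directions `e_i` and `e_j`. -/
def hessEntry (f : ℝ → ℝ → ℝ) (g : ℝ → ℝ) (n w : ℕ) (x : Fin n → ℝ) (ε : ℝ)
    (i j : Fin n) : ℝ :=
  fderiv ℝ (fun y : Fin n → ℝ =>
      fderiv ℝ (fun z : Fin n → ℝ => coupledPotential f g n w z ε) y (Pi.single i 1))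
    x (Pi.single j 1)

/-- `K_{f,g} = ‖g'‖_∞ + ‖g'‖_∞² ‖f'‖_∞ + ‖g''‖_∞`, with sup-norms over the unit interval
(and over `ε ∈ [0,1]` as well for `∂f/∂x`). -/
def Kfg (f : ℝ → ℝ → ℝ) (g : ℝ → ℝ) : ℝ :=
  sSup ((fun x => |deriv g x|) '' Icc (0:ℝ) 1) +
    (sSup ((fun x => |deriv g x|) '' Icc (0:ℝ) 1)) ^ 2 *
      sSup ((fun p : ℝ × ℝ => |deriv (fun z => f z p.2) p.1|) '' (Icc (0:ℝ) 1 ×ˢ Icc (0:ℝ) 1)) +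
    sSup ((fun x => |deriv (deriv g) x|) '' Icc (0:ℝ) 1)

/-!
On the open cube the gradient of `U` is `∂ᵢU(y) = g'(yᵢ) (yᵢ - Σₖ Aₖᵢ f((A g(y))ₖ; ε))`.
Written with one-sided derivatives of `g` and `f` on `[0, 1]`, this formula is differentiable
within the closed cube; since the open cube has unique tangent directions at every point of its
closure, any derivative of `∂ᵢU` at `x` agrees with the derivative of that extension. Hence
`U''(x) = diag(g'' (x - Aᵀ f(A g(x))) + g') - diag(g') Aᵀ diag(f'(A g(x))) A diag(g')`. Its row
sums are at most `‖g''‖ + ‖g'‖ + ‖g'‖² ‖f'‖ Σⱼ (AᵀA)ᵢⱼ`, because `x - Aᵀ f(A g(x)) ∈ [-1, 1]`, and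
`Σⱼ (AᵀA)ᵢⱼ ≤ 1` because `A ≥ 0` has row and column sums at most `1`.
-/

lemma card_filter_le_of_forall_val_mem_Ico {n a b : ℕ} (p : Fin n → Prop) [DecidablePred p]
    (h : ∀ j, p j → (j : ℕ) ∈ Finset.Ico a b) :
    (Finset.univ.filter p).card ≤ b - a := by
  rw [← Nat.card_Ico, ← Finset.card_map Fin.valEmbedding]
  refine Finset.card_le_card fun m hm => ?_
  obtain ⟨j, hj, rfl⟩ := Finset.mem_map.mp hm
  exact h j (Finset.mem_filter.mp hj).2

lemma sum_ite_one_div_le_one {ι : Type*} [Fintype ι] (p : ι → Prop) [DecidablePred p] {w : ℕ}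
    (h : (Finset.univ.filter p).card ≤ w) :
    ∑ j, (if p j then 1 / (w : ℝ) else 0) ≤ 1 := by
  rw [Finset.sum_ite, Finset.sum_const_zero, add_zero, Finset.sum_const, nsmul_eq_mul,
    mul_one_div]
  exact div_le_one_of_le₀ (by exact_mod_cast h) w.cast_nonneg

lemma Amat_nonneg (n w : ℕ) (k j : Fin n) : 0 ≤ Amat n w k j := by
  unfold Amat; split_ifs <;> positivity

lemma Amat_self_pos {n w : ℕ} (hw : 1 ≤ w) (k : Fin n) : 0 < Amat n w k k := by
  rw [Amat, if_pos ⟨le_rfl, by omega⟩]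
  positivity

lemma Amat_row_sum_le_one (n w : ℕ) (k : Fin n) : ∑ j, Amat n w k j ≤ 1 :=
  sum_ite_one_div_le_one _ <| (card_filter_le_of_forall_val_mem_Ico (a := k) (b := k + w) _
    fun _ hj => Finset.mem_Ico.mpr hj).trans (by omega)

lemma Amat_col_sum_le_one (n w : ℕ) (i : Fin n) : ∑ k, Amat n w k i ≤ 1 :=
  sum_ite_one_div_le_one _ <| (card_filter_le_of_forall_val_mem_Ico (a := i + 1 - w)
    (b := i + 1) _ fun _ hk => Finset.mem_Ico.mpr (by omega)).trans (by omega)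

lemma sum_mul_mem_Icc {ι : Type*} [Fintype ι] {a v : ι → ℝ} (ha : ∀ j, 0 ≤ a j)
    (ha1 : ∑ j, a j ≤ 1) (hv : ∀ j, v j ∈ Icc (0 : ℝ) 1) : ∑ j, a j * v j ∈ Icc (0 : ℝ) 1 :=
  ⟨Finset.sum_nonneg fun j _ => mul_nonneg (ha j) (hv j).1,
    (Finset.sum_le_sum fun j _ => mul_le_of_le_one_right (ha j) (hv j).2).trans ha1⟩

lemma sum_mul_mem_Ioo {ι : Type*} [Fintype ι] {a v : ι → ℝ} (ha : ∀ j, 0 ≤ a j)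
    (ha1 : ∑ j, a j ≤ 1) {k : ι} (hk : 0 < a k) (hv : ∀ j, v j ∈ Ioo (0 : ℝ) 1) :
    ∑ j, a j * v j ∈ Ioo (0 : ℝ) 1 :=
  ⟨Finset.sum_pos' (fun j _ => mul_nonneg (ha j) (hv j).1.le)
      ⟨k, Finset.mem_univ k, mul_pos hk (hv k).1⟩,
    (Finset.sum_lt_sum (fun j _ => mul_le_of_le_one_right (ha j) (hv j).2.le)
      ⟨k, Finset.mem_univ k, mul_lt_of_lt_one_right hk (hv k).2⟩).trans_le ha1⟩

lemma mulVec_Amat_mem_Icc {n : ℕ} (w : ℕ) {v : Fin n → ℝ} (hv : ∀ j, v j ∈ Icc (0 : ℝ) 1)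
    (k : Fin n) : (Amat n w *ᵥ v) k ∈ Icc (0 : ℝ) 1 :=
  sum_mul_mem_Icc (Amat_nonneg n w k) (Amat_row_sum_le_one n w k) hv

lemma mulVec_Amat_mem_Ioo {n w : ℕ} (hw : 1 ≤ w) {v : Fin n → ℝ} (hv : ∀ j, v j ∈ Ioo (0 : ℝ) 1)
    (k : Fin n) : (Amat n w *ᵥ v) k ∈ Ioo (0 : ℝ) 1 :=
  sum_mul_mem_Ioo (Amat_nonneg n w k) (Amat_row_sum_le_one n w k) (Amat_self_pos hw k) hv

lemma sum_sum_Amat_mul_Amat_le_one (n w : ℕ) (i : Fin n) :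
    ∑ j, ∑ k, Amat n w k i * Amat n w k j ≤ 1 :=
  calc ∑ j, ∑ k, Amat n w k i * Amat n w k j = ∑ k, Amat n w k i * ∑ j, Amat n w k j := by
        rw [Finset.sum_comm]; simp only [Finset.mul_sum]
    _ ≤ ∑ k, Amat n w k i := Finset.sum_le_sum fun k _ =>
        mul_le_of_le_one_right (Amat_nonneg n w k i) (Amat_row_sum_le_one n w k)
    _ ≤ 1 := Amat_col_sum_le_one n w i

lemma abs_sum_mul_mul_le {ι : Type*} [Fintype ι] {a b c : ι → ℝ} {C : ℝ} (ha : ∀ k, 0 ≤ a k)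
    (hb : ∀ k, 0 ≤ b k) (hc : ∀ k, |c k| ≤ C) :
    |∑ k, a k * c k * b k| ≤ C * ∑ k, a k * b k :=
  calc |∑ k, a k * c k * b k| ≤ ∑ k, a k * |c k| * b k := by
        refine (Finset.abs_sum_le_sum_abs _ _).trans_eq (Finset.sum_congr rfl fun k _ => ?_)
        rw [abs_mul, abs_mul, abs_of_nonneg (ha k), abs_of_nonneg (hb k)]
    _ ≤ ∑ k, a k * C * b k := by gcongr with k _ <;> [exact hb k; exact ha k; exact hc k]
    _ = C * ∑ k, a k * b k := by rw [Finset.mul_sum]; exact Finset.sum_congr rfl fun k _ => by ring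

lemma sum_abs_ite_sub_le {ι : Type*} [Fintype ι] [DecidableEq ι] (i : ι) (d : ℝ) (c : ι → ℝ) :
    ∑ j, |(if i = j then d else 0) - c j| ≤ |d| + ∑ j, |c j| :=
  (Finset.sum_le_sum fun j _ => abs_sub _ _).trans_eq <| by
    rw [Finset.sum_add_distrib]
    simp only [apply_ite abs, abs_zero, Finset.sum_ite_eq, Finset.mem_univ, if_true]

section Calculus

variable {𝕜 E F : Type*} [NontriviallyNormedField 𝕜] [NormedAddCommGroup E] [NormedSpace 𝕜 E]
  [NormedAddCommGroup F] [NormedSpace 𝕜 F]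

theorem HasFDerivAt.eq_of_hasFDerivWithinAt_of_eqOn {φ ψ : E → F} {L M : E →L[𝕜] F}
    {s : Set E} {x : E} (hφ : HasFDerivAt φ L x) (hψ : HasFDerivWithinAt ψ M s x)
    (hs : UniqueDiffWithinAt 𝕜 s x) (heq : EqOn φ ψ s) : L = M := by
  have : (𝓝[s] x).NeBot := mem_closure_iff_nhdsWithin_neBot.mp hs.mem_closure
  have hx : φ x = ψ x :=
    tendsto_nhds_unique (hφ.continuousAt.continuousWithinAt (s := s))
      (hψ.continuousWithinAt.congr' (eventually_nhdsWithin_of_forall fun y hy => (heq hy).symm))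
  exact hs.eq hφ.hasFDerivWithinAt (hψ.congr heq hx)

end Calculus

lemma uniqueDiffWithinAt_Ioo_of_mem_Icc {a b t : ℝ} (hab : a < b) (ht : t ∈ Icc a b) :
    UniqueDiffWithinAt ℝ (Ioo a b) t :=
  uniqueDiffWithinAt_convex (convex_Ioo a b) (by rwa [interior_Ioo, nonempty_Ioo])
    (by rwa [closure_Ioo hab.ne])

lemma deriv_eq_derivWithin_Icc_of_eqOn_Ioo {h D : ℝ → ℝ} {a b t : ℝ} (hab : a < b)
    (ht : t ∈ Icc a b) (hh : DifferentiableAt ℝ h t) (hD : DifferentiableWithinAt ℝ D (Icc a b) t)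
    (heq : EqOn h D (Ioo a b)) : deriv h t = derivWithin D (Icc a b) t := by
  simpa using DFunLike.congr_fun (hh.hasDerivAt.hasFDerivAt.eq_of_hasFDerivWithinAt_of_eqOn
    (hD.hasDerivWithinAt.mono Ioo_subset_Icc_self).hasFDerivWithinAt
    (uniqueDiffWithinAt_Ioo_of_mem_Icc hab ht) heq) 1

lemma le_csSup_of_continuousOn_Icc {u : ℝ → ℝ} {S : Set ℝ} {a b : ℝ} (hab : a < b)
    (hu : ContinuousOn u (Icc a b)) (hS : BddAbove S) (hmem : ∀ t ∈ Ioo a b, u t ∈ S) :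
    ∀ t ∈ Icc a b, u t ≤ sSup S := fun t ht =>
  ContinuousWithinAt.closure_le (by rwa [closure_Ioo hab.ne])
    ((hu t ht).mono Ioo_subset_Icc_self) continuousWithinAt_const
    fun s hs => le_csSup hS (hmem s hs)

section SupBounds

variable {h D : ℝ → ℝ} {a b : ℝ}

lemma bddAbove_abs_deriv_image_Icc (hab : a < b) (hD : ContDiffOn ℝ 1 D (Icc a b))
    (heq : EqOn h D (Ioo a b)) : BddAbove ((fun t => |deriv h t|) '' Icc a b) := by
  obtain ⟨C, hC⟩ := isCompact_Icc.exists_bound_of_continuousOn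
    (hD.continuousOn_derivWithin (uniqueDiffOn_Icc hab) le_rfl)
  refine ⟨max C 0, ?_⟩
  rintro _ ⟨t, ht, rfl⟩
  dsimp only
  by_cases hh : DifferentiableAt ℝ h t
  · rw [deriv_eq_derivWithin_Icc_of_eqOn_Ioo hab ht hh
      ((hD.differentiableOn one_ne_zero) t ht) heq]
    exact (hC t ht).trans (le_max_left _ _)
  · rw [deriv_zero_of_not_differentiableAt hh, abs_zero]
    exact le_max_right _ _

lemma abs_derivWithin_le_sSup_abs_deriv (hab : a < b) (hD : ContDiffOn ℝ 1 D (Icc a b))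
    (heq : EqOn h D (Ioo a b)) :
    ∀ t ∈ Icc a b, |derivWithin D (Icc a b) t| ≤ sSup ((fun t => |deriv h t|) '' Icc a b) :=
  le_csSup_of_continuousOn_Icc hab
    (hD.continuousOn_derivWithin (uniqueDiffOn_Icc hab) le_rfl).abs
    (bddAbove_abs_deriv_image_Icc hab hD heq) fun t ht =>
      ⟨t, Ioo_subset_Icc_self ht, by
        dsimp only
        rw [derivWithin_of_mem_nhds (Icc_mem_nhds ht.1 ht.2),
          (Filter.eventuallyEq_of_mem (Ioo_mem_nhds ht.1 ht.2) heq).deriv_eq]⟩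

end SupBounds

lemma sSup_image_abs_nonneg {α : Type*} (u : α → ℝ) (s : Set α) :
    0 ≤ sSup ((fun a => |u a|) '' s) :=
  Real.sSup_nonneg (by rintro _ ⟨a, _, rfl⟩; exact abs_nonneg _)

lemma Kfg_nonneg (f : ℝ → ℝ → ℝ) (g : ℝ → ℝ) : 0 ≤ Kfg f g :=
  add_nonneg (add_nonneg (sSup_image_abs_nonneg _ _)
    (mul_nonneg (sq_nonneg _) (sSup_image_abs_nonneg _ _))) (sSup_image_abs_nonneg _ _)

section PartialDeriv

variable {f : ℝ → ℝ → ℝ} {a b c d : ℝ}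

lemma contDiffOn_slice_left {m : WithTop ℕ∞} {s t : Set ℝ}
    (hf : ContDiffOn ℝ m (fun p : ℝ × ℝ => f p.1 p.2) (s ×ˢ t)) {ε : ℝ} (hε : ε ∈ t) :
    ContDiffOn ℝ m (fun z => f z ε) s :=
  hf.comp (contDiffOn_id.prodMk contDiffOn_const) fun _ hz => ⟨hz, hε⟩

lemma bddAbove_abs_deriv_left_image_Icc_prod (hab : a < b) (hcd : c < d)
    (hf : ContDiffOn ℝ 1 (fun p : ℝ × ℝ => f p.1 p.2) (Icc a b ×ˢ Icc c d)) :
    BddAbove ((fun p : ℝ × ℝ => |deriv (fun z => f z p.2) p.1|) '' (Icc a b ×ˢ Icc c d)) := by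
  obtain ⟨C, hC⟩ := (isCompact_Icc.prod isCompact_Icc).exists_bound_of_continuousOn
    (hf.continuousOn_fderivWithin ((uniqueDiffOn_Icc hab).prod (uniqueDiffOn_Icc hcd)) le_rfl)
  refine ⟨max C 0, ?_⟩
  rintro _ ⟨p, hp, rfl⟩
  dsimp only
  by_cases hh : DifferentiableAt ℝ (fun z => f z p.2) p.1
  · have hslice := ((hf.differentiableOn one_ne_zero) p hp).hasFDerivWithinAt.comp_hasDerivWithinAt
      p.1 ((hasDerivAt_id' p.1).prodMk (hasDerivAt_const p.1 p.2)).hasDerivWithinAt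
      fun _ hz => Set.mk_mem_prod (s := Icc a b) hz hp.2
    rw [(uniqueDiffOn_Icc hab p.1 hp.1).eq_deriv _ hh.hasDerivAt.hasDerivWithinAt hslice]
    calc _ ≤ ‖fderivWithin ℝ (fun p : ℝ × ℝ => f p.1 p.2) (Icc a b ×ˢ Icc c d) p‖ *
          ‖((1 : ℝ), (0 : ℝ))‖ := ContinuousLinearMap.le_opNorm _ _
      _ ≤ max C 0 := by simpa using (hC p hp).trans (le_max_left C 0)
  · rw [deriv_zero_of_not_differentiableAt hh, abs_zero]
    exact le_max_right _ _

lemma abs_derivWithin_left_le_sSup (hab : a < b) (hcd : c < d)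
    (hf : ContDiffOn ℝ 1 (fun p : ℝ × ℝ => f p.1 p.2) (Icc a b ×ˢ Icc c d)) {ε : ℝ}
    (hε : ε ∈ Icc c d) :
    ∀ t ∈ Icc a b, |derivWithin (fun z => f z ε) (Icc a b) t|
      ≤ sSup ((fun p : ℝ × ℝ => |deriv (fun z => f z p.2) p.1|) '' (Icc a b ×ˢ Icc c d)) :=
  le_csSup_of_continuousOn_Icc hab
    ((contDiffOn_slice_left hf hε).continuousOn_derivWithin (uniqueDiffOn_Icc hab) le_rfl).abs
    (bddAbove_abs_deriv_left_image_Icc_prod hab hcd hf) fun t ht =>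
      ⟨(t, ε), ⟨Ioo_subset_Icc_self ht, hε⟩, by
        dsimp only
        rw [derivWithin_of_mem_nhds (Icc_mem_nhds ht.1 ht.2)]⟩

end PartialDeriv

lemma hasDerivAt_integral_of_continuousOn_Icc {φ : ℝ → ℝ} {a b t : ℝ}
    (hφ : ContinuousOn φ (Icc a b)) (ht : t ∈ Ioo a b) :
    HasDerivAt (fun s => ∫ z in a..s, φ z) (φ t) t :=
  intervalIntegral.integral_hasDerivAt_right
    (hφ.mono (by rw [uIcc_of_le ht.1.le]; exact Icc_subset_Icc_right ht.2.le)).intervalIntegrable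
    ((hφ.mono Ioo_subset_Icc_self).stronglyMeasurableAtFilter isOpen_Ioo t ht)
    (hφ.continuousAt (Icc_mem_nhds ht.1 ht.2))

lemma hasFDerivWithinAt_mulVec_comp {ι κ : Type*} [Fintype κ] (A : Matrix ι κ ℝ) {φ : ℝ → ℝ}
    {φ' : κ → ℝ} {s : Set (κ → ℝ)} {t : Set ℝ} {x : κ → ℝ}
    (hs : ∀ j, MapsTo (fun y : κ → ℝ => y j) s t) (hφ : ∀ j, HasDerivWithinAt φ (φ' j) t (x j))
    (k : ι) :
    HasFDerivWithinAt (fun y : κ → ℝ => (A *ᵥ fun j => φ (y j)) k)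
      (∑ j, A k j • φ' j • (ContinuousLinearMap.proj j : (κ → ℝ) →L[ℝ] ℝ)) s x := by
  simp only [Matrix.mulVec, dotProduct]
  exact HasFDerivWithinAt.fun_sum fun j _ =>
    ((hφ j).comp_hasFDerivWithinAt x (hasFDerivWithinAt_apply j x s) (hs j)).const_mul _

def coupledGradient (f : ℝ → ℝ → ℝ) (g : ℝ → ℝ) (n w : ℕ) (ε : ℝ) (i : Fin n)
    (y : Fin n → ℝ) : ℝ :=
  derivWithin g (Icc 0 1) (y i) *
    (y i - ∑ k, Amat n w k i * f ((Amat n w *ᵥ fun j => g (y j)) k) ε)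

def coupledHessian (f : ℝ → ℝ → ℝ) (g : ℝ → ℝ) (n w : ℕ) (x : Fin n → ℝ) (ε : ℝ)
    (i j : Fin n) : ℝ :=
  (if i = j then
      derivWithin (derivWithin g (Icc 0 1)) (Icc 0 1) (x i) *
          (x i - ∑ k, Amat n w k i * f ((Amat n w *ᵥ fun j => g (x j)) k) ε) +
        derivWithin g (Icc 0 1) (x i)
    else 0) -
    derivWithin g (Icc 0 1) (x i) *
      (∑ k, Amat n w k i *
        derivWithin (fun z => f z ε) (Icc 0 1) ((Amat n w *ᵥ fun j => g (x j)) k) * Amat n w k j) *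
      derivWithin g (Icc 0 1) (x j)

namespace ScalarAdmissible

variable {f : ℝ → ℝ → ℝ} {g : ℝ → ℝ} {n : ℕ} {ε : ℝ}

lemma strictMonoOn_g (hsys : ScalarAdmissible f g) : StrictMonoOn g (Icc 0 1) :=
  strictMonoOn_of_deriv_pos (convex_Icc 0 1) hsys.g_smooth.continuousOn
    (by rw [interior_Icc]; exact hsys.g_deriv_pos)

lemma g_mem_Ioo (hsys : ScalarAdmissible f g) {t : ℝ} (ht : t ∈ Ioo (0 : ℝ) 1) :
    g t ∈ Ioo (0 : ℝ) 1 := by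
  have h0 : (0 : ℝ) ∈ Icc (0 : ℝ) 1 := left_mem_Icc.2 zero_le_one
  have h1 : (1 : ℝ) ∈ Icc (0 : ℝ) 1 := right_mem_Icc.2 zero_le_one
  refine ⟨?_, ?_⟩
  · simpa [hsys.g_zero] using hsys.strictMonoOn_g h0 (Ioo_subset_Icc_self ht) ht.1
  · exact (hsys.strictMonoOn_g (Ioo_subset_Icc_self ht) h1 ht.2).trans_le (hsys.g_mem 1 h1).2

lemma hasDerivAt_g (hsys : ScalarAdmissible f g) {t : ℝ} (ht : t ∈ Ioo (0 : ℝ) 1) :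
    HasDerivAt g (deriv g t) t :=
  ((hsys.g_smooth.differentiableOn two_ne_zero t (Ioo_subset_Icc_self ht)).differentiableAt
    (Icc_mem_nhds ht.1 ht.2)).hasDerivAt

lemma hasDerivAt_mul_self_sub_Gint (hsys : ScalarAdmissible f g) {t : ℝ}
    (ht : t ∈ Ioo (0 : ℝ) 1) :
    HasDerivAt (fun s => g s * s - Gint g s) (deriv g t * t) t :=
  (((hsys.hasDerivAt_g ht).mul (hasDerivAt_id' t)).sub
    (hasDerivAt_integral_of_continuousOn_Icc hsys.g_smooth.continuousOn ht)).congr_deriv (by ring)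

lemma hasDerivAt_Fint (hsys : ScalarAdmissible f g) (hε : ε ∈ Icc (0 : ℝ) 1) {t : ℝ}
    (ht : t ∈ Ioo (0 : ℝ) 1) : HasDerivAt (fun s => Fint f s ε) (f t ε) t :=
  hasDerivAt_integral_of_continuousOn_Icc (contDiffOn_slice_left hsys.f_smooth hε).continuousOn ht

lemma fderiv_coupledPotential_apply_single (hsys : ScalarAdmissible f g) {w : ℕ} (hw : 1 ≤ w)
    (hε : ε ∈ Icc (0 : ℝ) 1) {y : Fin n → ℝ} (hy : ∀ k, y k ∈ Ioo (0 : ℝ) 1) (i : Fin n) :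
    fderiv ℝ (fun z => coupledPotential f g n w z ε) y (Pi.single i 1)
      = coupledGradient f g n w ε i y := by
  have hθ := fun k => hasFDerivWithinAt_univ.mp <| hasFDerivWithinAt_mulVec_comp (Amat n w)
    (fun j => mapsTo_univ _ _) (fun j => (hsys.hasDerivAt_g (hy j)).hasDerivWithinAt) k
  have hsplit : (fun z => coupledPotential f g n w z ε) = fun z =>
      ∑ m, (g (z m) * z m - Gint g (z m)) - ∑ k, Fint f ((Amat n w *ᵥ fun j => g (z j)) k) ε := by
    funext z
    simp only [coupledPotential, Finset.sum_sub_distrib]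
  have hU : HasFDerivAt (fun z => coupledPotential f g n w z ε)
      (∑ m, (deriv g (y m) * y m) • (ContinuousLinearMap.proj m : (Fin n → ℝ) →L[ℝ] ℝ) -
        ∑ k, f ((Amat n w *ᵥ fun j => g (y j)) k) ε •
          ∑ j, Amat n w k j • deriv g (y j) •
            (ContinuousLinearMap.proj j : (Fin n → ℝ) →L[ℝ] ℝ)) y := by
    rw [hsplit]
    refine (HasFDerivAt.fun_sum fun m _ => ?_).sub (HasFDerivAt.fun_sum fun k _ => ?_)
    · exact (hsys.hasDerivAt_mul_self_sub_Gint (hy m)).comp_hasFDerivAt y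
        (hasFDerivAt_apply (𝕜 := ℝ) m y)
    · exact (hsys.hasDerivAt_Fint hε (mulVec_Amat_mem_Ioo hw (fun j => hsys.g_mem_Ioo (hy j)) k)
        ).comp_hasFDerivAt y (hθ k)
  rw [hU.fderiv, coupledGradient, derivWithin_of_mem_nhds (Icc_mem_nhds (hy i).1 (hy i).2)]
  simp only [_root_.sub_apply, _root_.sum_apply, _root_.smul_apply,
    ContinuousLinearMap.proj_apply, Pi.single_apply, smul_eq_mul, mul_ite, mul_one, mul_zero,
    Finset.sum_ite_eq', Finset.mem_univ, if_true]
  rw [mul_sub, Finset.mul_sum]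
  exact congrArg _ (Finset.sum_congr rfl fun k _ => by ring)

lemma exists_hasFDerivWithinAt_coupledGradient (hsys : ScalarAdmissible f g) (w : ℕ)
    (hε : ε ∈ Icc (0 : ℝ) 1) {x : Fin n → ℝ} (hx : ∀ k, x k ∈ Icc (0 : ℝ) 1) (i : Fin n) :
    ∃ M : (Fin n → ℝ) →L[ℝ] ℝ,
      HasFDerivWithinAt (coupledGradient f g n w ε i) M (univ.pi fun _ => Icc 0 1) x ∧
        ∀ j, M (Pi.single j 1) = coupledHessian f g n w x ε i j := by
  set C : Set (Fin n → ℝ) := univ.pi fun _ => Icc 0 1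
  have hC : ∀ m, MapsTo (fun y : Fin n → ℝ => y m) C (Icc 0 1) := fun m _ hy => hy m (mem_univ m)
  have hg' : HasDerivWithinAt (derivWithin g (Icc 0 1))
      (derivWithin (derivWithin g (Icc 0 1)) (Icc 0 1) (x i)) (Icc 0 1) (x i) :=
    ((hsys.g_smooth.derivWithin (m := 1) uniqueDiffOn_Icc_zero_one (by norm_num)).differentiableOn
      one_ne_zero (x i) (hx i)).hasDerivWithinAt
  have hθ := hasFDerivWithinAt_mulVec_comp (Amat n w) hC
    (fun j => (hsys.g_smooth.differentiableOn two_ne_zero (x j) (hx j)).hasDerivWithinAt)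
  have hθC : ∀ k, MapsTo (fun y : Fin n → ℝ => (Amat n w *ᵥ fun j => g (y j)) k) C (Icc 0 1) :=
    fun k y hy => mulVec_Amat_mem_Icc w (fun j => hsys.g_mem _ (hC j hy)) k
  have hf := fun k => ((contDiffOn_slice_left hsys.f_smooth hε).differentiableOn two_ne_zero _
    (hθC k (mem_univ_pi.mpr hx))).hasDerivWithinAt.comp_hasFDerivWithinAt x (hθ k) (hθC k)
  refine ⟨?M, ?hM, fun j => ?_⟩
  case hM =>
    exact (hg'.comp_hasFDerivWithinAt x (hasFDerivWithinAt_apply i x C) (hC i)).mul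
      ((hasFDerivWithinAt_apply i x C).sub
        (HasFDerivWithinAt.fun_sum fun k _ => (hf k).const_mul (Amat n w k i)))
  have hsum : ∀ a b : Fin n → ℝ,
      ∑ k, a k * (b k * (Amat n w k j * derivWithin g (Icc 0 1) (x j)))
        = (∑ k, a k * b k * Amat n w k j) * derivWithin g (Icc 0 1) (x j) := fun a b => by
    rw [Finset.sum_mul]
    exact Finset.sum_congr rfl fun k _ => by ring
  simp only [coupledHessian, _root_.add_apply, _root_.sub_apply, _root_.sum_apply,
    _root_.smul_apply, ContinuousLinearMap.proj_apply, Pi.single_apply, smul_eq_mul, mul_ite,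
    mul_one, mul_zero, Finset.sum_ite_eq', Finset.mem_univ, if_true, Function.comp_apply,
    Pi.sub_apply, hsum]
  split_ifs <;> ring

lemma hessEntry_eq_coupledHessian (hsys : ScalarAdmissible f g) {w : ℕ} (hw : 1 ≤ w)
    (hε : ε ∈ Icc (0 : ℝ) 1) {x : Fin n → ℝ} (hx : ∀ k, x k ∈ Icc (0 : ℝ) 1) {i : Fin n}
    (hdiff : DifferentiableAt ℝ
      (fun y => fderiv ℝ (fun z => coupledPotential f g n w z ε) y (Pi.single i 1)) x)
    (j : Fin n) : hessEntry f g n w x ε i j = coupledHessian f g n w x ε i j := by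
  obtain ⟨M, hM, hMj⟩ := hsys.exists_hasFDerivWithinAt_coupledGradient w hε hx i
  have hunique : UniqueDiffWithinAt ℝ (univ.pi fun _ => Ioo (0 : ℝ) 1) x :=
    UniqueDiffWithinAt.univ_pi fun k => uniqueDiffWithinAt_Ioo_of_mem_Icc zero_lt_one (hx k)
  rw [hessEntry, hdiff.hasFDerivAt.eq_of_hasFDerivWithinAt_of_eqOn
    (hM.mono (pi_mono fun _ _ => Ioo_subset_Icc_self)) hunique
    fun y hy => hsys.fderiv_coupledPotential_apply_single hw hε (fun k => hy k (mem_univ k)) i, hMj]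

lemma abs_derivWithin_g_le (hsys : ScalarAdmissible f g) :
    ∀ t ∈ Icc (0 : ℝ) 1,
      |derivWithin g (Icc 0 1) t| ≤ sSup ((fun t => |deriv g t|) '' Icc (0 : ℝ) 1) :=
  abs_derivWithin_le_sSup_abs_deriv zero_lt_one (hsys.g_smooth.of_le one_le_two) (eqOn_refl _ _)

lemma abs_derivWithin_derivWithin_g_le (hsys : ScalarAdmissible f g) :
    ∀ t ∈ Icc (0 : ℝ) 1, |derivWithin (derivWithin g (Icc 0 1)) (Icc 0 1) t|
      ≤ sSup ((fun t => |deriv (deriv g) t|) '' Icc (0 : ℝ) 1) :=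
  abs_derivWithin_le_sSup_abs_deriv zero_lt_one
    (hsys.g_smooth.derivWithin uniqueDiffOn_Icc_zero_one (by norm_num))
    fun t ht => (derivWithin_of_mem_nhds (Icc_mem_nhds ht.1 ht.2)).symm

lemma sum_abs_coupledHessian_le (hsys : ScalarAdmissible f g) (w : ℕ) (hε : ε ∈ Icc (0 : ℝ) 1)
    {x : Fin n → ℝ} (hx : ∀ k, x k ∈ Icc (0 : ℝ) 1) (i : Fin n) :
    ∑ j, |coupledHessian f g n w x ε i j| ≤ Kfg f g := by
  set Mg := sSup ((fun t => |deriv g t|) '' Icc (0 : ℝ) 1)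
  set Mgg := sSup ((fun t => |deriv (deriv g) t|) '' Icc (0 : ℝ) 1)
  set Mf := sSup ((fun p : ℝ × ℝ => |deriv (fun z => f z p.2) p.1|) '' (Icc (0 : ℝ) 1 ×ˢ Icc 0 1))
  have hMg : 0 ≤ Mg := sSup_image_abs_nonneg _ _
  have hθ : ∀ k, (Amat n w *ᵥ fun j => g (x j)) k ∈ Icc (0 : ℝ) 1 :=
    mulVec_Amat_mem_Icc w fun j => hsys.g_mem _ (hx j)
  have hσ : ∑ k, Amat n w k i * f ((Amat n w *ᵥ fun j => g (x j)) k) ε ∈ Icc (0 : ℝ) 1 :=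
    sum_mul_mem_Icc (fun k => Amat_nonneg n w k i) (Amat_col_sum_le_one n w i)
      fun k => hsys.f_mem _ (hθ k) ε hε
  have hdiag : |derivWithin (derivWithin g (Icc 0 1)) (Icc 0 1) (x i) *
        (x i - ∑ k, Amat n w k i * f ((Amat n w *ᵥ fun j => g (x j)) k) ε) +
      derivWithin g (Icc 0 1) (x i)| ≤ Mgg * 1 + Mg := by
    refine (abs_add_le _ _).trans (add_le_add ?_ (hsys.abs_derivWithin_g_le _ (hx i)))
    rw [abs_mul]
    exact mul_le_mul (hsys.abs_derivWithin_derivWithin_g_le _ (hx i))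
      (abs_sub_le_of_nonneg_of_le (hx i).1 (hx i).2 hσ.1 hσ.2) (abs_nonneg _)
      (sSup_image_abs_nonneg _ _)
  have hcoupling : ∀ j, |derivWithin g (Icc 0 1) (x i) *
        (∑ k, Amat n w k i *
          derivWithin (fun z => f z ε) (Icc 0 1) ((Amat n w *ᵥ fun j => g (x j)) k) *
            Amat n w k j) * derivWithin g (Icc 0 1) (x j)|
      ≤ Mg * (Mf * ∑ k, Amat n w k i * Amat n w k j) * Mg := fun j => by
    have hsum := abs_sum_mul_mul_le (fun k => Amat_nonneg n w k i) (fun k => Amat_nonneg n w k j)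
      fun k => abs_derivWithin_left_le_sSup zero_lt_one zero_lt_one
        (hsys.f_smooth.of_le one_le_two) hε _ (hθ k)
    rw [abs_mul, abs_mul]
    exact mul_le_mul (mul_le_mul (hsys.abs_derivWithin_g_le _ (hx i)) hsum (abs_nonneg _) hMg)
      (hsys.abs_derivWithin_g_le _ (hx j)) (abs_nonneg _)
      (mul_nonneg hMg ((abs_nonneg _).trans hsum))
  calc ∑ j, |coupledHessian f g n w x ε i j|
      ≤ (Mgg * 1 + Mg) + ∑ j, Mg * (Mf * ∑ k, Amat n w k i * Amat n w k j) * Mg :=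
        (sum_abs_ite_sub_le i _ _).trans
          (add_le_add hdiag (Finset.sum_le_sum fun j _ => hcoupling j))
    _ = (Mgg * 1 + Mg) + Mg ^ 2 * Mf * ∑ j, ∑ k, Amat n w k i * Amat n w k j := by
        rw [Finset.mul_sum]
        exact congrArg _ (Finset.sum_congr rfl fun j _ => by ring)
    _ ≤ (Mgg * 1 + Mg) + Mg ^ 2 * Mf * 1 :=
        add_le_add le_rfl (mul_le_mul_of_nonneg_left (sum_sum_Amat_mul_Amat_le_one n w i)
          (mul_nonneg (sq_nonneg _) (sSup_image_abs_nonneg _ _)))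
    _ = Kfg f g := by rw [Kfg]; ring

end ScalarAdmissible

/-- The Hessian of the coupled potential satisfies `‖U''(x;ε)‖_∞ ≤ K_{f,g}` (maximum
absolute row sum) for all `x ∈ [0,1]^n` and `ε ∈ [0,1]`; the bound `K_{f,g}` does not
depend on `n`, `L` or `w`. -/
theorem coupled_potential_hessian_norm_le (f : ℝ → ℝ → ℝ) (g : ℝ → ℝ)
    (hsys : ScalarAdmissible f g) (n w : ℕ) (hw : 1 ≤ w) (ε : ℝ) (hε : ε ∈ Icc (0:ℝ) 1)
    (x : Fin n → ℝ) (hx : ∀ i, x i ∈ Icc (0:ℝ) 1) :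
    ∀ i : Fin n, ∑ j : Fin n, |hessEntry f g n w x ε i j| ≤ Kfg f g := by
  intro i
  by_cases hdiff : DifferentiableAt ℝ
      (fun y => fderiv ℝ (fun z => coupledPotential f g n w z ε) y (Pi.single i 1)) x
  · simp_rw [hsys.hessEntry_eq_coupledHessian hw hε hx hdiff]
    exact hsys.sum_abs_coupledHessian_le w hε hx i
  · -- `fderiv` of a non-differentiable map is `0`
    have hzero : ∀ j, hessEntry f g n w x ε i j = 0 := fun j => by
      rw [hessEntry, fderiv_zero_of_not_differentiableAt hdiff, _root_.zero_apply]
    simpa only [hzero, abs_zero, Finset.sum_const_zero] using Kfg_nonneg f g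
end
end

section
/- For integers n and t with 2 ≤ t ≤ ⌊(n−1)/2⌋, the function P(x) = −x·g(x) + 2∫₀ˣ g(z)dz, where g(x) = Σ_{e=t}^{n−1} C(n−1,e) x^e (1−x)^{n−1−e}, has exactly one root x̄ in the interval (0,1]. -/
/-!
Write `m = n - 1` and let `G` be the tail from index `t` of the degree-`m` Bernstein basis.
Its derivative telescopes to `G' = t C(m,t) x^(t-1) (1-x)^(m-t)`, so
`P' = G - x G' = x^t (1-x)^(m-t) ψ(x / (1-x))` with
`ψ(u) = ∑ₖ C(m,t+k) uᵏ - t C(m,t)` (`oddsPoly`), strictly increasing on `u ≥ 0`.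
Hence `P'` vanishes at most once on `(0,1)`, and since `P(0) = 0`, Rolle's theorem allows at
most one root of `P` in `(0,1]`. For existence, `ψ(0) = (1-t) C(m,t) < 0` because `t ≥ 2`, so
`P < 0` just right of `0`; and `P(1) = 2∫₀¹ G - 1 > 0`, because `z ↦ 1 - z` turns `G` into one
minus the tail from `m + 1 - t`, which is smaller than `G` as `2t ≤ m`.
-/

open MeasureTheory Set Filter Topology

noncomputable section

/-- `g(x) = Σ_{e=t}^{n−1} C(n−1,e) xᵉ (1−x)^{n−1−e}`, the check-node update of the GLDPC
density evolution (degree-2 bits, length-`n` BCH constraints correcting `t` erasures). -/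
def gldpcG (n t : ℕ) (x : ℝ) : ℝ :=
  ∑ e ∈ Finset.Icc t (n - 1), ((n - 1).choose e : ℝ) * x ^ e * (1 - x) ^ (n - 1 - e)

/-- `P(x) = −x g(x) + 2 ∫₀ˣ g(z) dz`. -/
def gldpcP (n t : ℕ) (x : ℝ) : ℝ :=
  -x * gldpcG n t x + 2 * ∫ z in (0:ℝ)..x, gldpcG n t z

def bernsteinTail (m t : ℕ) (x : ℝ) : ℝ :=
  ∑ e ∈ Finset.Icc t m, (m.choose e : ℝ) * x ^ e * (1 - x) ^ (m - e)

section BernsteinTail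

variable {m t s : ℕ} {x : ℝ}

lemma bernsteinTail_eq_sum_Ico (m t : ℕ) (x : ℝ) :
    bernsteinTail m t x =
      ∑ e ∈ Finset.Ico t (m + 1), (m.choose e : ℝ) * x ^ e * (1 - x) ^ (m - e) := by
  rw [bernsteinTail, Finset.Ico_add_one_right_eq_Icc]

lemma bernsteinTail_from_zero (m : ℕ) (x : ℝ) : bernsteinTail m 0 x = 1 := by
  rw [bernsteinTail_eq_sum_Ico, Nat.Ico_zero_eq_range]
  have binomial := add_pow x (1 - x) m
  rw [add_sub_cancel, one_pow] at binomial
  exact (Finset.sum_congr rfl fun e _ => by ring).trans binomial.symm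

lemma bernsteinTail_at_zero (m : ℕ) (hs : 1 ≤ s) : bernsteinTail m s 0 = 0 :=
  Finset.sum_eq_zero fun e he => by simp [zero_pow (by grind : e ≠ 0)]

lemma bernsteinTail_one_sub (m t : ℕ) (x : ℝ) :
    bernsteinTail m t (1 - x) = 1 - bernsteinTail m (m + 1 - t) x := by
  set a : ℕ → ℝ := fun e => (m.choose e : ℝ) * x ^ e * (1 - x) ^ (m - e)
  have reflect : bernsteinTail m t (1 - x) = ∑ e ∈ Finset.Ico t (m + 1), a (m - e) := by
    rw [bernsteinTail_eq_sum_Ico]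
    refine Finset.sum_congr rfl fun e he => ?_
    have he : e ≤ m := by grind
    simp only [a, Nat.choose_symm he, Nat.sub_sub_self he, sub_sub_cancel]
    ring
  have split := Finset.sum_Ico_consecutive a (Nat.zero_le (m + 1 - t)) (Nat.sub_le (m + 1) t)
  rw [← bernsteinTail_eq_sum_Ico, ← bernsteinTail_eq_sum_Ico, bernsteinTail_from_zero] at split
  rw [reflect, Finset.sum_Ico_reflect a t le_rfl, Nat.sub_self]
  linarith

lemma bernsteinTail_lt_bernsteinTail (hts : t < s) (hs : s ≤ m + 1) (hx : x ∈ Ioo (0 : ℝ) 1) :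
    bernsteinTail m s x < bernsteinTail m t x := by
  rw [bernsteinTail_eq_sum_Ico, bernsteinTail_eq_sum_Ico,
    ← Finset.sum_Ico_consecutive _ hts.le hs, lt_add_iff_pos_left]
  refine Finset.sum_pos (fun e he => ?_) (Finset.nonempty_Ico.mpr hts)
  have hC : (0 : ℝ) < m.choose e := by exact_mod_cast Nat.choose_pos (by grind)
  have := hx.1; have := sub_pos.mpr hx.2
  positivity

lemma continuous_bernsteinTail (m t : ℕ) : Continuous (bernsteinTail m t) := by
  unfold bernsteinTail
  fun_prop

lemma hasDerivAt_choose_mul_pow_mul_pow (m e : ℕ) (x : ℝ) :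
    HasDerivAt (fun x : ℝ => (m.choose e : ℝ) * x ^ e * (1 - x) ^ (m - e))
      (e * m.choose e * x ^ (e - 1) * (1 - x) ^ (m - e)
        - (e + 1 : ℕ) * m.choose (e + 1) * x ^ e * (1 - x) ^ (m - (e + 1))) x := by
  have hpow := ((hasDerivAt_id' x).const_sub 1).fun_pow (m - e)
  refine (((hasDerivAt_pow e x).const_mul (m.choose e : ℝ)).fun_mul hpow).congr_deriv ?_
  rcases le_or_gt e m with hem | hme
  · have hchoose : (m.choose (e + 1) * (e + 1 : ℕ) : ℝ) = m.choose e * (m - e : ℕ) := by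
      exact_mod_cast Nat.choose_succ_right_eq m e
    rw [show m - (e + 1) = m - e - 1 by omega]
    push_cast [Nat.cast_sub hem] at hchoose ⊢
    linear_combination (x ^ e * (1 - x) ^ (m - e - 1)) * hchoose
  · simp [Nat.choose_eq_zero_of_lt hme, Nat.choose_eq_zero_of_lt (hme.trans e.lt_succ_self)]

lemma hasDerivAt_bernsteinTail (htm : t ≤ m) (x : ℝ) :
    HasDerivAt (bernsteinTail m t) (t * m.choose t * x ^ (t - 1) * (1 - x) ^ (m - t)) x := by
  set b : ℕ → ℝ := fun e => e * m.choose e * x ^ (e - 1) * (1 - x) ^ (m - e)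
  have hsum : HasDerivAt (bernsteinTail m t) (∑ e ∈ Finset.Icc t m, (b e - b (e + 1))) x :=
    HasDerivAt.fun_sum fun e _ => hasDerivAt_choose_mul_pow_mul_pow m e x
  have telescope : ∑ e ∈ Finset.Icc t m, (b e - b (e + 1)) = b t - b (m + 1) := by
    rw [← neg_sub, ← Finset.sum_Icc_sub htm, ← Finset.sum_neg_distrib]
    simp only [neg_sub]
  rwa [telescope, show b (m + 1) = 0 by simp [b], sub_zero] at hsum

end BernsteinTail

def trialEntropy (m t : ℕ) (x : ℝ) : ℝ :=
  -x * bernsteinTail m t x + 2 * ∫ z in (0 : ℝ)..x, bernsteinTail m t z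

def oddsPoly (m t : ℕ) (u : ℝ) : ℝ :=
  ∑ k ∈ Finset.range (m - t + 1), (m.choose (t + k) : ℝ) * u ^ k - t * m.choose t

section TrialEntropy

variable {m t : ℕ}

lemma hasDerivAt_trialEntropy (ht : 1 ≤ t) (htm : t ≤ m) (x : ℝ) :
    HasDerivAt (trialEntropy m t)
      (bernsteinTail m t x - t * m.choose t * x ^ t * (1 - x) ^ (m - t)) x := by
  have hprod := (hasDerivAt_neg' x).fun_mul (hasDerivAt_bernsteinTail htm x)
  have hint := ((continuous_bernsteinTail m t).integral_hasStrictDerivAt 0 x).hasDerivAt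
  refine (hprod.add (hint.const_mul 2)).congr_deriv ?_
  rw [show x ^ t = x * x ^ (t - 1) by rw [← pow_succ', Nat.sub_add_cancel ht]]
  ring

lemma continuous_trialEntropy (ht : 1 ≤ t) (htm : t ≤ m) : Continuous (trialEntropy m t) :=
  continuous_iff_continuousAt.mpr fun x => (hasDerivAt_trialEntropy ht htm x).continuousAt

lemma trialEntropy_zero (m t : ℕ) : trialEntropy m t 0 = 0 := by
  simp [trialEntropy]

lemma bernsteinTail_sub_eq_mul_oddsPoly (htm : t ≤ m) {x : ℝ} (hx : x ≠ 1) :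
    bernsteinTail m t x - t * m.choose t * x ^ t * (1 - x) ^ (m - t)
      = x ^ t * (1 - x) ^ (m - t) * oddsPoly m t (x / (1 - x)) := by
  have hx' : 1 - x ≠ 0 := sub_ne_zero.mpr hx.symm
  rw [bernsteinTail_eq_sum_Ico, Finset.sum_Ico_eq_sum_range, oddsPoly, mul_sub, Finset.mul_sum,
    show m + 1 - t = m - t + 1 by omega]
  congr 1
  · refine Finset.sum_congr rfl fun k hk => ?_
    have hk : k ≤ m - t := Nat.lt_succ_iff.mp (Finset.mem_range.mp hk)
    rw [show m - t = m - (t + k) + k by omega, pow_add, pow_add, div_pow]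
    field_simp
  · ring

lemma oddsPoly_zero (m t : ℕ) : oddsPoly m t 0 = (1 - t) * m.choose t := by
  simp [oddsPoly, Finset.sum_range_succ', sub_mul]

lemma continuous_oddsPoly (m t : ℕ) : Continuous (oddsPoly m t) := by
  unfold oddsPoly
  fun_prop

lemma strictMonoOn_oddsPoly (htm : t < m) : StrictMonoOn (oddsPoly m t) (Ici 0) := by
  intro u hu v _ huv
  refine sub_lt_sub_right
    (Finset.sum_lt_sum (fun k _ => ?_) ⟨m - t, Finset.self_mem_range_succ _, ?_⟩) _
  · exact mul_le_mul_of_nonneg_left (pow_le_pow_left₀ hu huv.le k) (Nat.cast_nonneg _)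
  · have hC : (0 : ℝ) < m.choose (t + (m - t)) := by
      rw [Nat.add_sub_cancel' htm.le]
      simp
    exact mul_lt_mul_of_pos_left (pow_lt_pow_left₀ huv hu (by omega)) hC

lemma hasDerivAt_trialEntropy_of_ne_one (ht : 1 ≤ t) (htm : t ≤ m) {x : ℝ} (hx : x ≠ 1) :
    HasDerivAt (trialEntropy m t) (x ^ t * (1 - x) ^ (m - t) * oddsPoly m t (x / (1 - x))) x :=
  (bernsteinTail_sub_eq_mul_oddsPoly htm hx) ▸ hasDerivAt_trialEntropy ht htm x

lemma strictMonoOn_oddsPoly_odds (htm : t < m) :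
    StrictMonoOn (fun x : ℝ => oddsPoly m t (x / (1 - x))) (Ico 0 1) := by
  refine (strictMonoOn_oddsPoly htm).comp (fun x hx y hy hxy => ?_)
    (fun x hx => div_nonneg hx.1 (sub_nonneg.mpr hx.2.le))
  rw [div_lt_div_iff₀ (sub_pos.mpr hx.2) (sub_pos.mpr hy.2)]
  nlinarith

lemma exists_trialEntropy_neg (ht : 2 ≤ t) (htm : t < m) :
    ∃ ε ∈ Ioo (0 : ℝ) 1, trialEntropy m t ε < 0 := by
  set φ : ℝ → ℝ := fun x => oddsPoly m t (x / (1 - x))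
  have hφ0 : φ 0 < 0 := by
    have hC : (0 : ℝ) < m.choose t := by exact_mod_cast Nat.choose_pos htm.le
    have ht' : (2 : ℝ) ≤ t := by exact_mod_cast ht
    simp only [φ, zero_div, oddsPoly_zero]
    nlinarith
  have hφ : ContinuousAt φ 0 :=
    (continuous_oddsPoly m t).continuousAt.comp
      (continuousAt_id.div (continuousAt_const.sub continuousAt_id) (by norm_num))
  have hev : ∀ᶠ x in 𝓝[>] (0 : ℝ), φ x < 0 ∧ x < 1 :=
    nhdsWithin_le_nhds ((hφ.eventually (gt_mem_nhds hφ0)).and (gt_mem_nhds one_pos))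
  obtain ⟨ε, ⟨hφε, hε1⟩, hε0 : 0 < ε⟩ := (hev.and self_mem_nhdsWithin).exists
  refine ⟨ε, ⟨hε0, hε1⟩, ?_⟩
  obtain ⟨c, hc, hslope⟩ := exists_hasDerivAt_eq_slope (trialEntropy m t)
    (fun x => x ^ t * (1 - x) ^ (m - t) * φ x) hε0
    (continuous_trialEntropy (by omega) htm.le).continuousOn
    (fun x hx => hasDerivAt_trialEntropy_of_ne_one (by omega) htm.le (hx.2.trans hε1).ne)
  have hφc : φ c < 0 :=
    (strictMonoOn_oddsPoly_odds htm ⟨hc.1.le, hc.2.trans hε1⟩ ⟨hε0.le, hε1⟩ hc.2).trans hφε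
  have hderiv : c ^ t * (1 - c) ^ (m - t) * φ c < 0 :=
    mul_neg_of_pos_of_neg (by have := sub_pos.mpr (hc.2.trans hε1); have := hc.1; positivity) hφc
  rw [trialEntropy_zero, sub_zero, sub_zero, eq_div_iff hε0.ne'] at hslope
  nlinarith

lemma trialEntropy_one_pos (h : t + t ≤ m) : 0 < trialEntropy m t 1 := by
  set s := m + 1 - t with hs
  have hG := continuous_bernsteinTail m t
  have hGs := continuous_bernsteinTail m s
  have hG1 : bernsteinTail m t 1 = 1 := by
    have := bernsteinTail_one_sub m t 0
    rwa [sub_zero, ← hs, bernsteinTail_at_zero m (by omega), sub_zero] at this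
  have hsymm :
      ∫ z in (0 : ℝ)..1, bernsteinTail m t z = 1 - ∫ z in (0 : ℝ)..1, bernsteinTail m s z := by
    have := intervalIntegral.integral_comp_sub_left (bernsteinTail m t) (a := 0) (b := 1) 1
    simp only [bernsteinTail_one_sub, sub_self, sub_zero] at this
    rw [← this, intervalIntegral.integral_sub intervalIntegrable_const
      (hGs.intervalIntegrable _ _)]
    simp
  have hlt : 0 < ∫ z in (0 : ℝ)..1, (bernsteinTail m t z - bernsteinTail m s z) :=
    intervalIntegral.intervalIntegral_pos_of_pos_on ((hG.sub hGs).intervalIntegrable _ _)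
      (fun x hx => sub_pos.mpr (bernsteinTail_lt_bernsteinTail (by omega) (by omega) hx)) one_pos
  rw [intervalIntegral.integral_sub (hG.intervalIntegrable _ _) (hGs.intervalIntegrable _ _)] at hlt
  rw [trialEntropy, hG1]
  linarith

lemma exists_trialEntropy_root (ht : 2 ≤ t) (h : t + t ≤ m) :
    ∃ x ∈ Ioc (0 : ℝ) 1, trialEntropy m t x = 0 := by
  obtain ⟨ε, hε, hPε⟩ := exists_trialEntropy_neg (m := m) ht (by omega)
  obtain ⟨x, hx, hPx⟩ := intermediate_value_Ioo hε.2.le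
    (continuous_trialEntropy (by omega) (by omega)).continuousOn ⟨hPε, trialEntropy_one_pos h⟩
  exact ⟨x, ⟨hε.1.trans hx.1, hx.2.le⟩, hPx⟩

lemma exists_oddsPoly_odds_eq_zero_of_trialEntropy_eq (ht : 1 ≤ t) (htm : t ≤ m) {a b : ℝ}
    (ha : 0 ≤ a) (hab : a < b) (hb : b ≤ 1) (hP : trialEntropy m t a = trialEntropy m t b) :
    ∃ c ∈ Ioo a b, oddsPoly m t (c / (1 - c)) = 0 := by
  obtain ⟨c, hc, hzero⟩ := exists_hasDerivAt_eq_zero hab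
    (continuous_trialEntropy ht htm).continuousOn hP
    (fun x hx => hasDerivAt_trialEntropy_of_ne_one ht htm (hx.2.trans_le hb).ne)
  have hc0 : 0 < c := ha.trans_lt hc.1
  have hc1 : 0 < 1 - c := sub_pos.mpr (hc.2.trans_le hb)
  exact ⟨c, hc, (mul_eq_zero.mp hzero).resolve_left (by positivity)⟩

lemma trialEntropy_roots_subsingleton (ht : 1 ≤ t) (htm : t < m) :
    {x ∈ Ioc (0 : ℝ) 1 | trialEntropy m t x = 0}.Subsingleton := by
  intro y₁ ⟨hy₁, hP₁⟩ y₂ ⟨hy₂, hP₂⟩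
  by_contra hne
  wlog hlt : y₁ < y₂ generalizing y₁ y₂
  · exact this hy₂ hP₂ hy₁ hP₁ (Ne.symm hne) ((not_lt.mp hlt).lt_of_ne (Ne.symm hne))
  obtain ⟨c₁, hc₁, h₁⟩ := exists_oddsPoly_odds_eq_zero_of_trialEntropy_eq ht htm.le le_rfl
    hy₁.1 hy₁.2 (by rw [trialEntropy_zero, hP₁])
  obtain ⟨c₂, hc₂, h₂⟩ := exists_oddsPoly_odds_eq_zero_of_trialEntropy_eq ht htm.le
    hy₁.1.le hlt hy₂.2 (hP₁.trans hP₂.symm)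
  have := (strictMonoOn_oddsPoly_odds htm).injOn ⟨hc₁.1.le, hc₁.2.trans_le hy₁.2⟩
    ⟨(hy₁.1.trans hc₂.1).le, hc₂.2.trans_le hy₂.2⟩ (h₁.trans h₂.symm)
  exact (hc₁.2.trans hc₂.1).ne this

end TrialEntropy

/-- For `2 ≤ t ≤ ⌊(n−1)/2⌋`, the function `P(x) = −x g(x) + 2∫₀ˣ g(z) dz` has exactly
one root in `(0,1]`. -/
theorem gldpc_trial_entropy_unique_root (n t : ℕ) (ht1 : 2 ≤ t) (ht2 : t ≤ (n - 1) / 2) :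
    ∃! x : ℝ, x ∈ Ioc (0:ℝ) 1 ∧ gldpcP n t x = 0 := by
  have hP : gldpcP n t = trialEntropy (n - 1) t := rfl
  have h2t : t + t ≤ n - 1 := by omega
  obtain ⟨x, hx, hPx⟩ := exists_trialEntropy_root ht1 h2t
  refine ⟨x, ⟨hx, hP ▸ hPx⟩, fun y hy => ?_⟩
  exact trialEntropy_roots_subsingleton (by omega) (by omega) (hP ▸ hy) ⟨hx, hPx⟩
end
end
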